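/- arXiv:1810.06975 — 2 statements merged into one kernel-verified Lean document; each statement's English description precedes it below -/
import Mathlib

section
/- Let p ≥ 1, 0 ≤ k ≤ p, and let P : Fin (p+1) → ℝ be Bézier control values. Then sup_{ξ ∈ [0,1]} |d^k/dξ^k ( Σ_{i=0}^{p} P_i B_i^p(ξ) )| ≤ (p!/(p−k)!) · max_{0 ≤ i ≤ p−k} | Σ_{j=0}^{k} (−1)^{k−j} C(k,j) P_{i+j} |. -/
/-- The `i`-th Bernstein polynomial of degree `p`: `B_i^p(ξ) = C(p,i) ξ^i (1-ξ)^(p-i)`. -/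
def bern (p i : ℕ) (ξ : ℝ) : ℝ := (p.choose i : ℝ) * ξ ^ i * (1 - ξ) ^ (p - i)

noncomputable def Qpoly (m : ℕ) (c : ℕ → ℝ) : Polynomial ℝ :=
  ∑ i ∈ Finset.range (m + 1), Polynomial.C (c i) * bernsteinPolynomial ℝ m i

/-- Iterated forward difference. -/
def fd (c : ℕ → ℝ) : ℕ → ℕ → ℝ
  | 0, i => c i
  | k + 1, i => fd c k (i + 1) - fd c k i

lemma fd_formula (c : ℕ → ℝ) : ∀ k i, fd c k i =
    ∑ j ∈ Finset.range (k + 1), (-1 : ℝ) ^ (k - j) * (k.choose j : ℝ) * c (i + j) := by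
  intro k
  induction k with
  | zero => intro i; simp [fd]
  | succ k ih =>
    intro i
    rw [show fd c (k+1) i = fd c k (i+1) - fd c k i from rfl, ih, ih]
    rw [Finset.sum_range_succ' (fun j => (-1 : ℝ) ^ (k + 1 - j) * ((k+1).choose j : ℝ) * c (i + j)) (k+1)]
    have h1 : ∀ j ∈ Finset.range (k+1),
        (-1 : ℝ) ^ (k + 1 - (j+1)) * ((k+1).choose (j+1) : ℝ) * c (i + (j+1))
          = (-1 : ℝ) ^ (k - j) * (k.choose j : ℝ) * c (i + 1 + j)
            + (-1 : ℝ) ^ (k - j) * (k.choose (j+1) : ℝ) * c (i + (j+1)) := by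
      intro j hj
      have : k + 1 - (j+1) = k - j := by omega
      rw [this, Nat.choose_succ_succ, Nat.cast_add]
      have : i + (j + 1) = i + 1 + j := by omega
      rw [this]
      ring
    rw [Finset.sum_congr rfl h1, Finset.sum_add_distrib]
    have h2 : ∑ j ∈ Finset.range (k+1), (-1 : ℝ) ^ (k - j) * (k.choose (j+1) : ℝ) * c (i + (j+1))
        + (-1 : ℝ) ^ (k + 1 - 0) * ((k+1).choose 0 : ℝ) * c (i + 0)
        = - ∑ j ∈ Finset.range (k+1), (-1 : ℝ) ^ (k - j) * (k.choose j : ℝ) * c (i + j) := by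
      have h3 := Finset.sum_range_succ'
        (fun j => (-1 : ℝ) ^ (k + 1 - j) * (k.choose j : ℝ) * c (i + j)) (k+1)
      have h4 : ∀ j ∈ Finset.range (k+1),
          (-1 : ℝ) ^ (k + 1 - (j+1)) * (k.choose (j+1) : ℝ) * c (i + (j+1))
            = (-1 : ℝ) ^ (k - j) * (k.choose (j+1) : ℝ) * c (i + (j+1)) := by
        intro j hj
        have hje : k + 1 - (j+1) = k - j := by omega
        rw [hje]
      rw [Finset.sum_congr rfl h4] at h3
      have h5 : ∑ j ∈ Finset.range (k+2), (-1 : ℝ) ^ (k + 1 - j) * (k.choose j : ℝ) * c (i + j)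
          = ∑ j ∈ Finset.range (k+1), (-1 : ℝ) ^ (k + 1 - j) * (k.choose j : ℝ) * c (i + j) := by
        rw [Finset.sum_range_succ, Nat.choose_succ_self]
        simp
      have h6 : ∀ j ∈ Finset.range (k+1),
          (-1 : ℝ) ^ (k + 1 - j) * (k.choose j : ℝ) * c (i + j)
            = -((-1 : ℝ) ^ (k - j) * (k.choose j : ℝ) * c (i + j)) := by
        intro j hj
        rw [Finset.mem_range] at hj
        have : k + 1 - j = (k - j) + 1 := by omega
        rw [this, pow_succ]
        ring
      rw [h5, Finset.sum_congr rfl h6, Finset.sum_neg_distrib] at h3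
      simp only [Nat.choose_zero_right, Nat.cast_one] at h3 ⊢
      linarith [h3]
    rw [add_assoc, h2]
    ring

lemma shift_sum (m : ℕ) (c : ℕ → ℝ) :
    ∑ i ∈ Finset.range (m + 1), Polynomial.C (c (i+1)) * bernsteinPolynomial ℝ m (i+1)
      = ∑ i ∈ Finset.range (m + 1), Polynomial.C (c i) * bernsteinPolynomial ℝ m i
        - Polynomial.C (c 0) * bernsteinPolynomial ℝ m 0 := by
  have h := Finset.sum_range_succ' (fun i => Polynomial.C (c i) * bernsteinPolynomial ℝ m i) (m+1)
  have h2 := Finset.sum_range_succ (fun i => Polynomial.C (c i) * bernsteinPolynomial ℝ m i) (m+1)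
  rw [bernsteinPolynomial.eq_zero_of_lt ℝ (Nat.lt_succ_self m)] at h2
  simp only [mul_zero, add_zero] at h2
  rw [h2] at h
  linear_combination -h

lemma deriv_Qpoly (m : ℕ) (c : ℕ → ℝ) :
    Polynomial.derivative (Qpoly (m + 1) c) =
      Polynomial.C (((m : ℝ) + 1)) * Qpoly m (fun i => c (i+1) - c i) := by
  unfold Qpoly
  rw [map_sum, Finset.sum_range_succ'
    (fun i => Polynomial.derivative (Polynomial.C (c i) * bernsteinPolynomial ℝ (m+1) i)) (m+1)]
  simp only [Polynomial.derivative_C_mul, bernsteinPolynomial.derivative_succ,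
    bernsteinPolynomial.derivative_zero, Nat.add_sub_cancel, Nat.cast_add, Nat.cast_one]
  rw [Finset.mul_sum]
  have expand : ∀ i ∈ Finset.range (m+1),
      Polynomial.C (c (i+1)) * (((m : Polynomial ℝ) + 1) * (bernsteinPolynomial ℝ m i - bernsteinPolynomial ℝ m (i+1)))
        = ((m : Polynomial ℝ) + 1) * (Polynomial.C (c (i+1)) * bernsteinPolynomial ℝ m i)
          - ((m : Polynomial ℝ) + 1) * (Polynomial.C (c (i+1)) * bernsteinPolynomial ℝ m (i+1)) := by
    intro i _; ring
  rw [Finset.sum_congr rfl expand, Finset.sum_sub_distrib, ← Finset.mul_sum, ← Finset.mul_sum,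
    shift_sum]
  have cast1 : (Polynomial.C ((m : ℝ) + 1)) = ((m : Polynomial ℝ) + 1) := by
    simp [map_add]
  rw [cast1]
  have expand2 : ∀ i ∈ Finset.range (m+1),
      ((m : Polynomial ℝ) + 1) * (Polynomial.C (c (i+1) - c i) * bernsteinPolynomial ℝ m i)
        = ((m : Polynomial ℝ) + 1) * (Polynomial.C (c (i+1)) * bernsteinPolynomial ℝ m i)
          - ((m : Polynomial ℝ) + 1) * (Polynomial.C (c i) * bernsteinPolynomial ℝ m i) := by
    intro i _
    rw [map_sub]; ring
  rw [Finset.sum_congr rfl expand2, Finset.sum_sub_distrib, ← Finset.mul_sum, ← Finset.mul_sum]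
  ring

lemma iter_deriv_Qpoly (p : ℕ) (c : ℕ → ℝ) :
    ∀ k, k ≤ p → Polynomial.derivative^[k] (Qpoly p c) =
      Polynomial.C ((p.descFactorial k : ℕ) : ℝ) * Qpoly (p - k) (fd c k) := by
  intro k
  induction k with
  | zero => intro _; simp [fd]
  | succ k ih =>
    intro hk
    have hk' : k ≤ p := by omega
    rw [Function.iterate_succ_apply', ih hk', Polynomial.derivative_C_mul]
    have hm : p - k = (p - (k+1)) + 1 := by omega
    rw [hm, deriv_Qpoly]
    have : Qpoly (p - (k+1)) (fun i => fd c k (i+1) - fd c k i)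
        = Qpoly (p - (k+1)) (fd c (k+1)) := rfl
    rw [this, Nat.descFactorial_succ]
    rw [← mul_assoc, ← map_mul]
    congr 2
    push_cast [show p - k = p - (k+1) + 1 from hm]
    ring

lemma bernstein_eval_nonneg (m i : ℕ) {ξ : ℝ} (hξ : ξ ∈ Set.Icc (0:ℝ) 1) :
    0 ≤ (bernsteinPolynomial ℝ m i).eval ξ := by
  obtain ⟨h0, h1⟩ := hξ
  simp only [bernsteinPolynomial, Polynomial.eval_mul, Polynomial.eval_pow,
    Polynomial.eval_natCast, Polynomial.eval_X, Polynomial.eval_sub, Polynomial.eval_one]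
  exact mul_nonneg (mul_nonneg (Nat.cast_nonneg _) (pow_nonneg h0 _))
    (pow_nonneg (by linarith) _)

lemma bernstein_eval_sum (m : ℕ) (ξ : ℝ) :
    ∑ i ∈ Finset.range (m + 1), (bernsteinPolynomial ℝ m i).eval ξ = 1 := by
  have := bernsteinPolynomial.sum ℝ m
  calc ∑ i ∈ Finset.range (m + 1), (bernsteinPolynomial ℝ m i).eval ξ
      = (∑ i ∈ Finset.range (m + 1), bernsteinPolynomial ℝ m i).eval ξ := by
        rw [Polynomial.eval_finset_sum]
    _ = 1 := by rw [this, Polynomial.eval_one]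

lemma Qpoly_eval_bound (m : ℕ) (c : ℕ → ℝ) (M : ℝ)
    (hM : ∀ i, i ≤ m → |c i| ≤ M) {ξ : ℝ} (hξ : ξ ∈ Set.Icc (0:ℝ) 1) :
    |(Qpoly m c).eval ξ| ≤ M := by
  unfold Qpoly
  rw [Polynomial.eval_finset_sum]
  calc |∑ i ∈ Finset.range (m+1), (Polynomial.C (c i) * bernsteinPolynomial ℝ m i).eval ξ|
      ≤ ∑ i ∈ Finset.range (m+1), |(Polynomial.C (c i) * bernsteinPolynomial ℝ m i).eval ξ| :=
        Finset.abs_sum_le_sum_abs _ _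
    _ ≤ ∑ i ∈ Finset.range (m+1), M * (bernsteinPolynomial ℝ m i).eval ξ := by
        apply Finset.sum_le_sum
        intro i hi
        rw [Finset.mem_range] at hi
        rw [Polynomial.eval_mul, Polynomial.eval_C, abs_mul,
          abs_of_nonneg (bernstein_eval_nonneg m i hξ)]
        exact mul_le_mul_of_nonneg_right (hM i (by omega)) (bernstein_eval_nonneg m i hξ)
    _ = M := by rw [← Finset.mul_sum, bernstein_eval_sum, mul_one]

lemma iter_deriv_eval (q : Polynomial ℝ) :
    ∀ k, deriv^[k] (fun x => q.eval x) = fun x => (Polynomial.derivative^[k] q).eval x := by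
  intro k
  induction k generalizing q with
  | zero => rfl
  | succ k ih =>
    rw [Function.iterate_succ_apply, Function.iterate_succ_apply]
    have hd : deriv (fun x => q.eval x) = fun x => q.derivative.eval x := by
      funext x
      exact Polynomial.deriv (p := q)
    rw [hd]
    exact ih q.derivative

/-- The sup over `[0,1]` of the `k`-th derivative of a polynomial in Bernstein–Bézier form
with control values `P` is bounded by `(p!/(p−k)!)` times the maximal absolute `k`-th
forward difference `| Σ_{j=0}^{k} (−1)^{k−j} C(k,j) P_{i+j} |` of the control values. -/
theorem bernstein_form_iteratedDeriv_bound (p k : ℕ) (hp : 1 ≤ p) (hk : k ≤ p)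
    (P : Fin (p + 1) → ℝ) (ξ : ℝ) (hξ : ξ ∈ Set.Icc (0 : ℝ) 1) :
    |iteratedDeriv k (fun t => ∑ i : Fin (p + 1), P i * bern p i t) ξ|
      ≤ ((p.factorial / (p - k).factorial : ℕ) : ℝ) *
          Finset.univ.sup' Finset.univ_nonempty (fun i : Fin (p - k + 1) =>
            |∑ j : Fin (k + 1),
              (-1 : ℝ) ^ (k - j.val) * (k.choose j.val : ℝ) *
                P ⟨i.val + j.val, by have := i.isLt; have := j.isLt; omega⟩|) := by
  set c : ℕ → ℝ := fun i => if h : i < p + 1 then P ⟨i, h⟩ else 0 with hc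
  have hfun : (fun t => ∑ i : Fin (p + 1), P i * bern p i t)
      = fun t => (Qpoly p c).eval t := by
    funext t
    unfold Qpoly
    rw [Polynomial.eval_finset_sum]
    calc ∑ i : Fin (p + 1), P i * bern p i t
        = ∑ i : Fin (p + 1), c i.val * bern p i.val t := by
          apply Finset.sum_congr rfl
          intro i _
          rw [hc]
          simp [i.isLt]
      _ = ∑ i ∈ Finset.range (p + 1), c i * bern p i t :=
          Fin.sum_univ_eq_sum_range (fun i => c i * bern p i t) (p + 1)
      _ = ∑ i ∈ Finset.range (p + 1), (Polynomial.C (c i) * bernsteinPolynomial ℝ p i).eval t := by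
          apply Finset.sum_congr rfl
          intro i _
          simp only [bern, bernsteinPolynomial, Polynomial.eval_mul, Polynomial.eval_C,
            Polynomial.eval_pow, Polynomial.eval_natCast, Polynomial.eval_X,
            Polynomial.eval_sub, Polynomial.eval_one]
  rw [hfun, iteratedDeriv_eq_iterate, iter_deriv_eval, iter_deriv_Qpoly p c k hk]
  simp only [Polynomial.eval_mul, Polynomial.eval_C]
  rw [abs_mul, abs_of_nonneg (Nat.cast_nonneg _)]
  have hdf : ((p.factorial / (p - k).factorial : ℕ) : ℝ) = ((p.descFactorial k : ℕ) : ℝ) := by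
    rw [Nat.descFactorial_eq_div hk]
  rw [hdf]
  apply mul_le_mul_of_nonneg_left _ (Nat.cast_nonneg _)
  apply Qpoly_eval_bound _ _ _ _ hξ
  intro i hi
  rw [fd_formula]
  have key : ∑ j ∈ Finset.range (k + 1), (-1 : ℝ) ^ (k - j) * (k.choose j : ℝ) * c (i + j)
      = ∑ j : Fin (k + 1), (-1 : ℝ) ^ (k - j.val) * (k.choose j.val : ℝ) *
          P ⟨(⟨i, by omega⟩ : Fin (p - k + 1)).val + j.val, by omega⟩ := by
    rw [← Fin.sum_univ_eq_sum_range (fun j => (-1 : ℝ) ^ (k - j) * (k.choose j : ℝ) * c (i + j)) (k + 1)]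
    apply Finset.sum_congr rfl
    intro j _
    have hij : i + j.val < p + 1 := by have := j.isLt; omega
    rw [hc]
    simp [hij]
  rw [key]
  exact Finset.le_sup' (fun i : Fin (p - k + 1) =>
    |∑ j : Fin (k + 1), (-1 : ℝ) ^ (k - j.val) * (k.choose j.val : ℝ) *
      P ⟨i.val + j.val, by have := i.isLt; have := j.isLt; omega⟩|) (Finset.mem_univ ⟨i, by omega⟩)
end

section
/- Let p ≥ 1, let 0 ≤ k₁ ≤ p and 0 ≤ k₂ ≤ p, and let P : Fin (p+1) × Fin (p+1) → ℝ be control values of a tensor-product Bézier function B(ξ₁,ξ₂) = Σ_{i=0}^{p} Σ_{j=0}^{p} P_{ij} B_i^p(ξ₁) B_j^p(ξ₂). Then sup_{(ξ₁,ξ₂) ∈ [0,1]²} |∂^{k₁}_{ξ₁} ∂^{k₂}_{ξ₂} B(ξ₁,ξ₂)| ≤ (p!/(p−k₁)!) (p!/(p−k₂)!) · max_{0 ≤ i ≤ p−k₁, 0 ≤ j ≤ p−k₂} | Σ_{r=0}^{k₁} Σ_{s=0}^{k₂} (−1)^{k₁−r} (−1)^{k₂−s} C(k₁,r) C(k₂,s)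 P_{(i+r)(j+s)} |. -/
/-!
Bernstein–Bézier functions are closed under differentiation: summation by parts in the
derivative formula for Bernstein polynomials gives
`d/dt Σ_ν a_ν B_ν^(n+1) = (n + 1) Σ_ν (Δa)_ν B_ν^n`. Differentiating `k₂` times in `ξ₂` and
then `k₁` times in `ξ₁`, the mixed derivative of a tensor-product Bézier function of degree
`(m, n)` is `m^(k₁) n^(k₂)` (descending factorials) times the tensor-product Bézier function of
degree `(m - k₁, n - k₂)` whose control values are the mixed forward differences. Since the
Bernstein polynomials are nonnegative and sum to one on `[0, 1]`, a Bézier function is bounded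
there by the largest absolute value of its control values.
-/

open Finset Polynomial fwdDiff Fin.NatCast

theorem bernsteinPolynomial.derivative_sum_C_mul {R : Type*} [CommRing R] (n : ℕ) (a : ℕ → R) :
    derivative (∑ ν ∈ range (n + 2), C (a ν) * bernsteinPolynomial R (n + 1) ν) =
      (n + 1 : R[X]) * ∑ ν ∈ range (n + 1), C (Δ_[1] a ν) * bernsteinPolynomial R n ν := by
  have summation_by_parts : ∑ ν ∈ range (n + 1), C (Δ_[1] a ν) * bernsteinPolynomial R n ν =
      ∑ ν ∈ range (n + 1), C (a (ν + 1)) *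
        (bernsteinPolynomial R n ν - bernsteinPolynomial R n (ν + 1)) -
      C (a 0) * bernsteinPolynomial R n 0 := by
    have telescope := sum_range_sub (fun ν => C (a ν) * bernsteinPolynomial R n ν) (n + 1)
    rw [bernsteinPolynomial.eq_zero_of_lt R (Nat.lt_succ_self n), mul_zero, zero_sub] at telescope
    rw [sub_eq_add_neg, ← telescope, ← sum_add_distrib]
    refine sum_congr rfl fun ν _ => ?_
    simp only [fwdDiff, C_sub]
    ring
  rw [sum_range_succ', derivative_add, derivative_sum, summation_by_parts, mul_sub, mul_sum]
  simp only [derivative_C_mul, bernsteinPolynomial.derivative_succ,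
    bernsteinPolynomial.derivative_zero, Nat.add_sub_cancel, Nat.cast_add, Nat.cast_one]
  rw [sub_eq_add_neg]
  exact congrArg₂ (· + ·) (sum_congr rfl fun ν _ => by ring) (by ring)

noncomputable def bezier (n : ℕ) (a : ℕ → ℝ) (t : ℝ) : ℝ := ∑ ν ∈ range (n + 1), a ν * bern n ν t

noncomputable def tensorBezier (m n : ℕ) (Q : ℕ → ℕ → ℝ) (x y : ℝ) : ℝ :=
  bezier m (fun i => bezier n (Q i) y) x

def mixedFwdDiff {G : Type*} [AddCommGroup G] (k₁ k₂ : ℕ) (Q : ℕ → ℕ → G) (i j : ℕ) : G :=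
  Δ_[1] ^[k₁] (fun i' => Δ_[1] ^[k₂] (Q i') j) i

theorem bern_eq_eval (n ν : ℕ) (t : ℝ) : bern n ν t = (bernsteinPolynomial ℝ n ν).eval t := by
  simp [bern, bernsteinPolynomial]

theorem bezier_eq_eval (n : ℕ) (a : ℕ → ℝ) (t : ℝ) :
    bezier n a t = (∑ ν ∈ range (n + 1), C (a ν) * bernsteinPolynomial ℝ n ν).eval t := by
  simp [bezier, eval_finsetSum, bern_eq_eval]

theorem bezier_smul (n : ℕ) (c : ℝ) (a : ℕ → ℝ) (t : ℝ) :
    bezier n (c • a) t = c * bezier n a t := by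
  simp only [bezier, mul_sum, Pi.smul_apply, smul_eq_mul, mul_assoc]

theorem deriv_bezier_succ (n : ℕ) (a : ℕ → ℝ) :
    deriv (bezier (n + 1) a) = bezier n (((n : ℝ) + 1) • Δ_[1] a) := by
  ext t
  rw [bezier_smul, funext (bezier_eq_eval (n + 1) a), Polynomial.deriv,
    bernsteinPolynomial.derivative_sum_C_mul, eval_mul, bezier_eq_eval]
  simp

theorem iteratedDeriv_bezier {n k : ℕ} (hk : k ≤ n) (a : ℕ → ℝ) (t : ℝ) :
    iteratedDeriv k (bezier n a) t = n.descFactorial k * bezier (n - k) (Δ_[1] ^[k] a) t := by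
  induction k generalizing n a with
  | zero => simp
  | succ k ih =>
    obtain ⟨n, rfl⟩ := Nat.exists_eq_add_of_le' (Nat.zero_lt_of_lt hk)
    rw [iteratedDeriv_succ', deriv_bezier_succ, ih (by omega), Nat.succ_descFactorial_succ,
      Function.iterate_succ_apply, fwdDiff_iter_const_smul, bezier_smul, Nat.add_sub_add_right]
    push_cast
    ring

theorem fwdDiff_iter_bezier (n k : ℕ) (Q : ℕ → ℕ → ℝ) (t : ℝ) :
    Δ_[1] ^[k] (fun i => bezier n (Q i) t) =
      fun i => bezier n (fun j => Δ_[1] ^[k] (fun i' => Q i' j) i) t := by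
  ext i
  have : (fun i' => bezier n (Q i') t) = ∑ j ∈ range (n + 1), bern n j t • fun i' => Q i' j := by
    ext i'; simp [bezier, mul_comm]
  rw [this, fwdDiff_iter_finsetSum, Finset.sum_apply]
  simp only [fwdDiff_iter_const_smul, Pi.smul_apply, smul_eq_mul, bezier]
  exact sum_congr rfl fun _ _ => mul_comm _ _

theorem bezier_comm (m n : ℕ) (Q : ℕ → ℕ → ℝ) (x y : ℝ) :
    bezier m (fun i => bezier n (Q i) y) x = bezier n (fun j => bezier m (fun i => Q i j) x) y := by
  simp only [bezier, sum_mul]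
  rw [sum_comm]
  exact sum_congr rfl fun _ _ => sum_congr rfl fun _ _ => by ring

theorem iteratedDeriv_tensorBezier {m n k₁ k₂ : ℕ} (hk₁ : k₁ ≤ m) (hk₂ : k₂ ≤ n)
    (Q : ℕ → ℕ → ℝ) (ξ₁ ξ₂ : ℝ) :
    iteratedDeriv k₁ (fun x => iteratedDeriv k₂ (tensorBezier m n Q x) ξ₂) ξ₁ =
      m.descFactorial k₁ * n.descFactorial k₂ *
        tensorBezier (m - k₁) (n - k₂) (mixedFwdDiff k₁ k₂ Q) ξ₁ ξ₂ := by
  have inner : (fun x => iteratedDeriv k₂ (tensorBezier m n Q x) ξ₂) =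
      bezier m ((n.descFactorial k₂ : ℝ) • fun i => bezier (n - k₂) (Δ_[1] ^[k₂] (Q i)) ξ₂) := by
    ext x
    have : tensorBezier m n Q x = bezier n (fun j => bezier m (fun i => Q i j) x) := by
      ext y; exact bezier_comm m n Q x y
    rw [this, iteratedDeriv_bezier hk₂, bezier_smul, fwdDiff_iter_bezier, bezier_comm]
  rw [inner, iteratedDeriv_bezier hk₁, fwdDiff_iter_const_smul, bezier_smul,
    fwdDiff_iter_bezier, mul_assoc]
  rfl

theorem bern_nonneg (n ν : ℕ) {t : ℝ} (ht : t ∈ Set.Icc (0 : ℝ) 1) : 0 ≤ bern n ν t :=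
  mul_nonneg (mul_nonneg (Nat.cast_nonneg _) (pow_nonneg ht.1 ν)) (pow_nonneg (sub_nonneg.2 ht.2) _)

theorem sum_bern (n : ℕ) (t : ℝ) : ∑ ν ∈ range (n + 1), bern n ν t = 1 := by
  simpa [bern_eq_eval, eval_finsetSum] using congrArg (eval t) (bernsteinPolynomial.sum ℝ n)

theorem abs_bezier_le {n : ℕ} {a : ℕ → ℝ} {M : ℝ} (ha : ∀ ν ≤ n, |a ν| ≤ M) {t : ℝ}
    (ht : t ∈ Set.Icc (0 : ℝ) 1) : |bezier n a t| ≤ M := by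
  calc |bezier n a t| ≤ ∑ ν ∈ range (n + 1), |a ν| * bern n ν t := by
        refine (abs_sum_le_sum_abs _ _).trans_eq (sum_congr rfl fun ν _ => ?_)
        rw [abs_mul, abs_of_nonneg (bern_nonneg n ν ht)]
    _ ≤ ∑ ν ∈ range (n + 1), M * bern n ν t := by
        gcongr with ν hν
        · exact bern_nonneg n ν ht
        · exact ha ν (Nat.lt_succ_iff.1 (mem_range.1 hν))
    _ = M := by rw [← mul_sum, sum_bern, mul_one]

theorem abs_tensorBezier_le {m n : ℕ} {Q : ℕ → ℕ → ℝ} {M : ℝ}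
    (hQ : ∀ i ≤ m, ∀ j ≤ n, |Q i j| ≤ M) {x y : ℝ} (hx : x ∈ Set.Icc (0 : ℝ) 1)
    (hy : y ∈ Set.Icc (0 : ℝ) 1) : |tensorBezier m n Q x y| ≤ M :=
  abs_bezier_le (fun i hi => abs_bezier_le (hQ i hi) hy) hx

theorem mixedFwdDiff_eq_sum {R : Type*} [CommRing R] (k₁ k₂ : ℕ) (Q : ℕ → ℕ → R) (i j : ℕ) :
    mixedFwdDiff k₁ k₂ Q i j = ∑ r ∈ range (k₁ + 1), ∑ s ∈ range (k₂ + 1),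
      (-1) ^ (k₁ - r) * (-1) ^ (k₂ - s) * (k₁.choose r : R) * (k₂.choose s : R) *
        Q (i + r) (j + s) := by
  simp only [mixedFwdDiff, fwdDiff_iter_eq_sum_shift, mul_sum, zsmul_eq_mul, smul_eq_mul, mul_one]
  push_cast
  exact sum_congr rfl fun _ _ => sum_congr rfl fun _ _ => by ring

-- The casts `ℕ → Fin (m + 1)` wrap around modulo `m + 1`; only indices `≤ m` are ever read.
theorem sum_fin_eq_tensorBezier (m n : ℕ) (P : Fin (m + 1) × Fin (n + 1) → ℝ) (x y : ℝ) :
    ∑ i : Fin (m + 1), ∑ j : Fin (n + 1), P (i, j) * bern m i x * bern n j y =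
      tensorBezier m n (fun i j => P ((i : Fin (m + 1)), (j : Fin (n + 1)))) x y := by
  simp only [tensorBezier, bezier, ← Fin.sum_univ_eq_sum_range, Fin.cast_val_eq_self, sum_mul]
  exact sum_congr rfl fun _ _ => sum_congr rfl fun _ _ => by ring

/-- For a tensor-product Bernstein–Bézier function
`B(ξ₁,ξ₂) = Σ_{i,j} P_{ij} B_i^p(ξ₁) B_j^p(ξ₂)`, the mixed partial derivative of order
`(k₁,k₂)` is bounded on `[0,1]²` by `(p!/(p−k₁)!)(p!/(p−k₂)!)` times the maximal absolute
mixed forward difference of the control values. -/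
theorem tensor_bernstein_mixed_deriv_bound (p k₁ k₂ : ℕ)
    (hk₁ : k₁ ≤ p) (hk₂ : k₂ ≤ p) (P : Fin (p + 1) × Fin (p + 1) → ℝ)
    (ξ₁ ξ₂ : ℝ) (h₁ : ξ₁ ∈ Set.Icc (0 : ℝ) 1) (h₂ : ξ₂ ∈ Set.Icc (0 : ℝ) 1) :
    |iteratedDeriv k₁ (fun x => iteratedDeriv k₂ (fun y =>
        ∑ i : Fin (p + 1), ∑ j : Fin (p + 1), P (i, j) * bern p i x * bern p j y) ξ₂) ξ₁|
      ≤ ((p.factorial / (p - k₁).factorial : ℕ) : ℝ) *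
          ((p.factorial / (p - k₂).factorial : ℕ) : ℝ) *
          Finset.univ.sup' Finset.univ_nonempty
            (fun ij : Fin (p - k₁ + 1) × Fin (p - k₂ + 1) =>
              |∑ r : Fin (k₁ + 1), ∑ s : Fin (k₂ + 1),
                (-1 : ℝ) ^ (k₁ - r.val) * (-1 : ℝ) ^ (k₂ - s.val) *
                  (k₁.choose r.val : ℝ) * (k₂.choose s.val : ℝ) *
                  P (⟨ij.1.val + r.val, by have := ij.1.isLt; have := r.isLt; omega⟩,
                     ⟨ij.2.val + s.val, by have := ij.2.isLt; have := s.isLt; omega⟩)|) := by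
  simp only [sum_fin_eq_tensorBezier]
  rw [iteratedDeriv_tensorBezier hk₁ hk₂, ← Nat.descFactorial_eq_div hk₁,
    ← Nat.descFactorial_eq_div hk₂, abs_mul, abs_of_nonneg (by positivity)]
  gcongr
  refine abs_tensorBezier_le (fun i hi j hj => le_sup'_of_le _ (mem_univ
    (⟨i, Nat.lt_succ_of_le hi⟩, ⟨j, Nat.lt_succ_of_le hj⟩)) (le_of_eq ?_)) h₁ h₂
  simp only [mixedFwdDiff_eq_sum, ← Fin.sum_univ_eq_sum_range]
  congr 1
  refine sum_congr rfl fun r _ => sum_congr rfl fun s _ => ?_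
  rw [Fin.natCast_eq_mk, Fin.natCast_eq_mk]
end
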